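/- arXiv:2302.03081 — 10 statements merged into one kernel-verified Lean document; each statement's English description precedes it below -/
import Mathlib

section
/- For any function f from a finite group G to itself, f is a constant function if and only if pres(f) = |G|. -/
open Finset

variable {G : Type*}

/-- Number of distinct values of `g`. -/
def V [Fintype G] [DecidableEq G] (g : G → G) : ℕ := (univ.image g).card

/-- Permutation resemblance of `f`. -/
noncomputable def pres [Fintype G] [DecidableEq G] [AddGroup G] (f : G → G) : ℕ :=
  sInf {n | ∃ g : G → G, Function.Bijective (fun x => g x + f x) ∧ V g = n}

/-- Uniformity of `f`: the maximal number of preimages of a point. -/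
def uf [Fintype G] [DecidableEq G] (f : G → G) : ℕ :=
  univ.sup fun b => (univ.filter fun x => f x = b).card

/-- `M f r`: number of elements with exactly `r` preimages under `f`. -/
def M [Fintype G] [DecidableEq G] (f : G → G) (r : ℕ) : ℕ :=
  (univ.filter fun b => (univ.filter fun x => f x = b).card = r).card

/-- `N f s`: number of `s`-tuples of pairwise distinct elements on which `f` is constant. -/
noncomputable def N [Fintype G] (f : G → G) (s : ℕ) : ℕ :=
  Nat.card {t : Fin s → G // Function.Injective t ∧ ∀ i j, f (t i) = f (t j)}

theorem stmt_1 [Fintype G] [DecidableEq G] [AddGroup G] (f : G → G) :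
    (∃ c, ∀ x, f x = c) ↔ pres f = Fintype.card G := by
  constructor
  · rintro ⟨c, hc⟩
    have hmem : Fintype.card G ∈
        {n | ∃ g : G → G, Function.Bijective (fun x => g x + f x) ∧ V g = n} := by
      refine ⟨fun x => x - c, ?_, ?_⟩
      · have h : (fun x : G => (x - c) + f x) = id := by
          funext x; simp [hc]
        rw [h]; exact Function.bijective_id
      · have hinj : Function.Injective (fun x : G => x - c) := by
          intro x y h
          simpa using congrArg (fun z => z + c) h
        simp [V, Finset.card_image_of_injective _ hinj, Finset.card_univ]
    refine le_antisymm (Nat.sInf_le hmem) (le_csInf ⟨_, hmem⟩ ?_)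
    rintro n ⟨g, hbij, rfl⟩
    have hg : Function.Injective g := by
      intro x y h
      exact hbij.injective (by simp only [h, hc])
    simp [V, Finset.card_image_of_injective _ hg, Finset.card_univ]
  · intro hpres
    by_contra hnc
    push_neg at hnc
    obtain ⟨a, ha⟩ := hnc (f 0)
    set u : G := -f 0 + f a with hu_def
    have hu : u ≠ 0 := by
      intro h
      exact ha ((neg_add_eq_zero.mp (hu_def ▸ h)).symm)
    have ha0 : a ≠ 0 := fun h => ha (by rw [h])
    set σ := Equiv.swap a u with hσ
    set g : G → G := fun x => σ x - f x with hg
    have hbij : Function.Bijective (fun x => g x + f x) := by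
      have h : (fun x => g x + f x) = σ := by
        funext x; simp [hg]
      rw [h]; exact σ.bijective
    have hga : g a = g 0 := by
      have h1 : σ a = u := Equiv.swap_apply_left a u
      have h2 : σ 0 = 0 := Equiv.swap_apply_of_ne_of_ne (Ne.symm ha0) (Ne.symm hu)
      simp only [hg, h1, h2, hu_def]
      simp [sub_eq_add_neg, add_assoc]
    have hVlt : V g < Fintype.card G := by
      have himg : univ.image g = (univ.erase a).image g := by
        apply le_antisymm
        · intro y hy
          simp only [mem_image, mem_univ, true_and] at hy
          obtain ⟨x, rfl⟩ := hy
          by_cases hx : x = a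
          · subst hx
            exact mem_image.mpr ⟨0, Finset.mem_erase.mpr ⟨Ne.symm ha0, mem_univ _⟩, hga.symm⟩
          · exact mem_image.mpr ⟨x, Finset.mem_erase.mpr ⟨hx, mem_univ _⟩, rfl⟩
        · exact Finset.image_subset_image (Finset.subset_univ _) |>.trans le_rfl
          
      calc V g = ((univ.erase a).image g).card := by rw [V, himg]
        _ ≤ (univ.erase a).card := Finset.card_image_le
        _ < univ.card := Finset.card_erase_lt_of_mem (mem_univ a)
        _ = Fintype.card G := Finset.card_univ
    have hle : pres f ≤ V g := Nat.sInf_le ⟨g, hbij, rfl⟩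
    omega
end

section
/- For any function f from a finite group G of order q to itself, u(f) ≤ pres(f) ≤ q - V(f) + 1, where u(f) = max over b ∈ G of the number of preimages of b under f, and V(f) is the number of distinct values of f. -/
open Finset

variable {G : Type*}

theorem stmt_3 [Fintype G] [DecidableEq G] [AddGroup G] (f : G → G) :
    uf f ≤ pres f ∧ pres f ≤ Fintype.card G - V f + 1 := by
  classical
  constructor
  · -- lower bound
    apply le_csInf
    · refine ⟨V (fun x => x - f x), fun x => x - f x, ?_, rfl⟩
      have : (fun x => (x - f x) + f x) = id := funext fun x => by
        simp [sub_add_cancel]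
      rw [this]; exact Function.bijective_id
    · rintro n ⟨g, hg, rfl⟩
      apply Finset.sup_le
      intro b _
      apply Finset.card_le_card_of_injOn g
      · intro x _
        exact mem_image_of_mem g (mem_univ x)
      · intro x hx y hy hxy
        have hfx : f x = b := (mem_filter.mp hx).2
        have hfy : f y = b := (mem_filter.mp hy).2
        have : g x + f x = g y + f y := by rw [hfx, hfy, hxy]
        exact hg.injective this
  · -- upper bound
    set A : Finset G := univ.image f with hA
    set r : G → G := Function.invFun f with hr
    have hfr : ∀ v ∈ A, f (r v) = v := by
      intro v hv
      obtain ⟨x, _, hx⟩ := mem_image.mp hv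
      exact Function.invFun_eq ⟨x, hx⟩
    set T : Finset G := A.image r with hT
    have hTcard : T.card = A.card := by
      apply card_image_of_injOn
      intro v hv w hw hvw
      rw [← hfr v hv, ← hfr w hw, hvw]
    have hfT : ∀ x ∈ T, x = r (f x) := by
      intro x hx
      obtain ⟨v, hv, hx'⟩ := mem_image.mp hx
      rw [← hx', hfr v hv]
    have hcards : Tᶜ.card = Aᶜ.card := by
      rw [card_compl, card_compl, hTcard]
    set e : (Tᶜ : Finset G) ≃ (Aᶜ : Finset G) := Finset.equivOfCardEq hcards with he
    set h : G → G := fun x => if hx : x ∈ T then f x else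
      (e ⟨x, Finset.mem_compl.mpr hx⟩ : G) with hh
    have hmemB : ∀ (x : G) (hx : x ∉ T), (e ⟨x, Finset.mem_compl.mpr hx⟩ : G) ∉ A := by
      intro x hx
      exact Finset.mem_compl.mp (e ⟨x, Finset.mem_compl.mpr hx⟩).2
    have hinj : Function.Injective h := by
      intro x y hxy
      simp only [hh] at hxy
      split_ifs at hxy with hx hy hy
      · rw [hfT x hx, hfT y hy, hxy]
      · exact absurd (hxy ▸ mem_image_of_mem f (mem_univ x)) (hmemB y hy)
      · exact absurd (hxy ▸ mem_image_of_mem f (mem_univ y)) (hmemB x hx)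
      · have := e.injective (Subtype.ext hxy)
        exact congrArg Subtype.val this
    have hbij : Function.Bijective h := Finite.injective_iff_bijective.mp hinj
    set g : G → G := fun x => h x - f x with hg
    have hgb : Function.Bijective (fun x => g x + f x) := by
      have : (fun x => g x + f x) = h := funext fun x => by
        simp [hg, sub_add_cancel]
      rw [this]; exact hbij
    have hVg : V g ≤ Fintype.card G - V f + 1 := by
      have hsub : univ.image g ⊆ insert (0:G) (Tᶜ.image g) := by
        intro b hb
        obtain ⟨x, _, rfl⟩ := mem_image.mp hb
        by_cases hx : x ∈ T
        · have : g x = 0 := by simp [hg, hh, dif_pos hx]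
          rw [this]; exact mem_insert_self _ _
        · exact mem_insert_of_mem (mem_image_of_mem g (Finset.mem_compl.mpr hx))
      calc V g ≤ (insert (0:G) (Tᶜ.image g)).card := card_le_card hsub
        _ ≤ Tᶜ.card + 1 := by
            refine (card_insert_le _ _).trans ?_
            exact Nat.add_le_add_right card_image_le 1
        _ = Fintype.card G - V f + 1 := by
            rw [card_compl, hTcard]
            rfl
    exact le_trans (Nat.sInf_le ⟨g, hgb, rfl⟩) hVg
end

section
/- Let L be an additive (F_p-linear) polynomial map on the finite field F_{p^e}, i.e., L(x) = Σ_{i=0}^{e-1} a_i x^{p^i}. Then pres(L) = u(L), the size of the kernel of L. -/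
open Finset

variable {G : Type*}

theorem stmt_6 {F : Type*} [Field F] [Fintype F] [DecidableEq F]
    (L : F → F) (hadd : ∀ x y, L (x + y) = L x + L y) :
    pres L = uf L := by
  set Lhom : F →+ F := AddMonoidHom.mk' L hadd with hLhom
  have hLeq : ∀ x, Lhom x = L x := fun x => rfl
  set K : AddSubgroup F := Lhom.ker with hK
  set I : AddSubgroup F := Lhom.range with hI
  -- cardinalities
  have hcard1 : Nat.card F = Nat.card (F ⧸ K) * Nat.card K :=
    AddSubgroup.card_eq_card_quotient_mul_card_addSubgroup K
  have hcard2 : Nat.card F = Nat.card (F ⧸ I) * Nat.card I :=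
    AddSubgroup.card_eq_card_quotient_mul_card_addSubgroup I
  have hqi : Nat.card (F ⧸ K) = Nat.card I :=
    Nat.card_congr (QuotientAddGroup.quotientKerEquivRange Lhom).toEquiv
  have hIpos : 0 < Nat.card I := Nat.card_pos
  have hKQ : Nat.card K = Nat.card (F ⧸ I) := by
    have h3 : Nat.card I * Nat.card K = Nat.card I * Nat.card (F ⧸ I) := by
      rw [← hqi]
      calc Nat.card (F ⧸ K) * Nat.card K = Nat.card F := hcard1.symm
        _ = Nat.card (F ⧸ I) * Nat.card I := hcard2
        _ = Nat.card (F ⧸ K) * Nat.card (F ⧸ I) := by rw [hqi]; ring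
    exact Nat.eq_of_mul_eq_mul_left hIpos h3
  haveI : Fintype K := Fintype.ofFinite _
  haveI : Fintype (F ⧸ I) := Fintype.ofFinite _
  have hKQ' : Fintype.card K = Fintype.card (F ⧸ I) := by
    rw [← Nat.card_eq_fintype_card, ← Nat.card_eq_fintype_card]; exact hKQ
  set e : K ≃ (F ⧸ I) := Fintype.equivOfCardEq hKQ' with he
  set σ : K → F := fun k => (e k).out with hσ
  have hσI : ∀ k, (σ k : F ⧸ I) = e k := fun k => QuotientAddGroup.out_eq' (e k)
  set w : F → F := fun x => (QuotientAddGroup.mk (s := K) x).out with hw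
  have hwK : ∀ x, (w x : F ⧸ K) = (x : F ⧸ K) := fun x =>
    QuotientAddGroup.out_eq' (QuotientAddGroup.mk (s := K) x)
  have hKmem : ∀ x, x - w x ∈ K := fun x =>
    (QuotientAddGroup.eq_iff_sub_mem).mp (hwK x).symm
  set g : F → F := fun x => σ ⟨x - w x, hKmem x⟩ with hg
  have hLw : ∀ x, L (w x) = L x := by
    intro x
    have hm : Lhom (x - w x) = 0 := hKmem x
    rw [map_sub, hLeq, hLeq] at hm
    linear_combination -hm
  -- injectivity of h = g + L
  have hinj : Function.Injective (fun x => g x + L x) := by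
    intro x y hxy
    simp only [hg] at hxy
    have h1 : σ ⟨x - w x, hKmem x⟩ - σ ⟨y - w y, hKmem y⟩ = L (w y) - L (w x) := by
      rw [hLw, hLw]; linear_combination hxy
    have hmem : σ ⟨x - w x, hKmem x⟩ - σ ⟨y - w y, hKmem y⟩ ∈ I := by
      rw [h1]
      exact I.sub_mem ⟨w y, rfl⟩ ⟨w x, rfl⟩
    have hqeq : (σ ⟨x - w x, hKmem x⟩ : F ⧸ I) = (σ ⟨y - w y, hKmem y⟩ : F ⧸ I) :=
      (QuotientAddGroup.eq_iff_sub_mem).mpr hmem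
    rw [hσI, hσI] at hqeq
    have hkeq : (⟨x - w x, hKmem x⟩ : K) = ⟨y - w y, hKmem y⟩ := e.injective hqeq
    have hkeq' : x - w x = y - w y := congrArg Subtype.val hkeq
    have hLwe : L (w x) = L (w y) := by
      have hσeq := congrArg σ hkeq
      rw [hσeq, sub_self] at h1
      linear_combination h1
    have hwq : (w x : F ⧸ K) = (w y : F ⧸ K) := by
      apply (QuotientAddGroup.eq_iff_sub_mem).mpr
      show Lhom (w x - w y) = 0
      rw [map_sub, hLeq, hLeq, hLwe, sub_self]
    rw [hwK x, hwK y] at hwq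
    have hweq : w x = w y := congrArg Quotient.out hwq
    linear_combination hkeq' + hweq
  have hbij : Function.Bijective (fun x => g x + L x) :=
    Finite.injective_iff_bijective.mp hinj
  -- V g = card K
  have hVg : V g = Fintype.card K := by
    have hsurj : Function.Surjective (fun x : F => (⟨x - w x, hKmem x⟩ : K)) := by
      intro k
      refine ⟨(k : F) + w 0, ?_⟩
      have hw0 : w 0 ∈ K := by
        have h00 : ((w 0 : F) : F ⧸ K) = ((0 : F) : F ⧸ K) := hwK 0
        have := (QuotientAddGroup.eq_iff_sub_mem).mp h00
        simpa using this
      have h0 : QuotientAddGroup.mk (s := K) ((k : F) + w 0)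
          = QuotientAddGroup.mk (s := K) 0 := by
        apply (QuotientAddGroup.eq_iff_sub_mem).mpr
        have hmem : (k : F) + w 0 - 0 ∈ K := by simpa using K.add_mem k.2 hw0
        exact hmem
      have hwe : w ((k : F) + w 0) = w 0 := by
        show (QuotientAddGroup.mk (s := K) ((k : F) + w 0)).out = _
        rw [h0]
      ext
      simp [hwe]
    have himg : univ.image g = univ.image σ := by
      apply Finset.Subset.antisymm
      · intro b hb
        simp only [Finset.mem_image, Finset.mem_univ, true_and] at hb ⊢
        obtain ⟨x, hx⟩ := hb
        exact ⟨⟨x - w x, hKmem x⟩, hx⟩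
      · intro b hb
        simp only [Finset.mem_image, Finset.mem_univ, true_and] at hb ⊢
        obtain ⟨k, hk⟩ := hb
        obtain ⟨x, hx⟩ := hsurj k
        simp only at hx
        exact ⟨x, by show σ ⟨x - w x, hKmem x⟩ = b; rw [hx, hk]⟩
    have hσinj : Function.Injective σ := by
      intro k1 k2 hk
      exact e.injective (by rw [← hσI, ← hσI, hk])
    rw [V, himg, Finset.card_image_of_injective _ hσinj, Finset.card_univ]
  -- uniformity = card K
  have hfiber : ∀ b : F, (univ.filter fun x => L x = b).card ≤ Fintype.card K := by
    intro b
    rcases Finset.eq_empty_or_nonempty (univ.filter fun x => L x = b) with h | h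
    · rw [h]; simp
    · obtain ⟨x0, hx0⟩ := h
      simp only [Finset.mem_filter] at hx0
      have : (univ.filter fun x => L x = b).card = Fintype.card K := by
        rw [← Finset.card_univ]
        apply Finset.card_bij (fun x hx => (⟨x - x0, by
            have hxb : L x = b := (Finset.mem_filter.mp hx).2
            show Lhom (x - x0) = 0
            rw [map_sub, hLeq, hLeq, hxb, hx0.2, sub_self]⟩ : K))
        · intros; exact Finset.mem_univ _
        · intro a ha a' ha' hh
          have := congrArg Subtype.val hh
          simp only at this
          linear_combination this
        · intro k _
          refine ⟨(k : F) + x0, ?_, ?_⟩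
          · simp only [Finset.mem_filter, Finset.mem_univ, true_and]
            have hk : L (k : F) = 0 := k.2
            rw [← hLeq, map_add, hLeq, hLeq, hk, zero_add, hx0.2]
          · ext; simp
      omega
  have hufK : uf L = Fintype.card K := by
    apply le_antisymm
    · exact Finset.sup_le fun b _ => hfiber b
    · have h0 : (univ.filter fun x => L x = 0).card = Fintype.card K := by
        rw [← Finset.card_univ]
        apply Finset.card_bij (fun x hx => (⟨x, by
            show Lhom x = 0
            rw [hLeq]; exact (Finset.mem_filter.mp hx).2⟩ : K))
        · intros; exact Finset.mem_univ _
        · intro a ha a' ha' hh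
          exact congrArg Subtype.val hh
        · intro k _
          exact ⟨(k : F), Finset.mem_filter.mpr ⟨Finset.mem_univ _, k.2⟩, rfl⟩
      calc Fintype.card K = (univ.filter fun x => L x = 0).card := h0.symm
        _ ≤ (univ.sup fun b => (univ.filter fun x => L x = b).card) :=
            Finset.le_sup (f := fun b => (univ.filter fun x => L x = b).card) (Finset.mem_univ (0 : F))
        _ = uf L := rfl
  -- lower bound: any valid g' has V g' ≥ uf L
  have hlow : ∀ n ∈ {n | ∃ g' : F → F, Function.Bijective (fun x => g' x + L x) ∧ V g' = n},
      uf L ≤ n := by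
    rintro n ⟨g', hbij', rfl⟩
    rw [uf]
    apply Finset.sup_le
    intro b _
    have hsub : (univ.filter fun x => L x = b).image g' ⊆ univ.image g' :=
      Finset.image_subset_image (Finset.subset_univ _)
    have hinjOn : Set.InjOn g' (univ.filter fun x => L x = b) := by
      intro a ha a' ha' hgg
      simp only [Finset.coe_filter, Set.mem_setOf_eq] at ha ha'
      apply hbij'.1
      simp only [ha.2, ha'.2, hgg]
    calc (univ.filter fun x => L x = b).card
        = ((univ.filter fun x => L x = b).image g').card :=
          (Finset.card_image_of_injOn hinjOn).symm
      _ ≤ (univ.image g').card := Finset.card_le_card hsub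
  -- conclude
  apply le_antisymm
  · exact Nat.sInf_le ⟨g, hbij, hVg.trans hufK.symm⟩
  · exact le_csInf ⟨Fintype.card K, g, hbij, hVg⟩ hlow
end

section
/- Let p be an odd prime with p ≡ 3 (mod 4), and let f(x) = x^{(p-1)/2} on F_p (the quadratic character map). Then pres(f) = (p-1)/2. -/
open Finset

variable {G : Type*}

def wfun (j : ℕ) : ℕ := if j ≤ 1 then 1 else if j % 2 = 0 then 2*j else 2*j - 1

lemma cover (p n : ℕ) (hp : p % 4 = 3) (hn : n < p) (h1 : n ≠ 1) :
    ∃ j, 1 ≤ j ∧ 2*j < p ∧ (n = wfun j + 1 ∨ n + 1 = wfun j) := by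
  refine ⟨if n ≤ 2 then 1 else if n % 2 = 1 then
      (if ((n-1)/2) % 2 = 0 then (n-1)/2 else (n+1)/2) else
      (if (n/2) % 2 = 1 then n/2 else n/2+1), ?_⟩
  unfold wfun
  split_ifs <;> omega

section
variable (p : ℕ) [Fact p.Prime] (hp : p % 4 = 3)
include hp

lemma hp2 : 2 < p := by
  have h := (Fact.out : p.Prime).two_le; omega

lemma hsig (x : ZMod p) (hx : x ≠ 0) :
    x ^ ((p-1)/2) = 1 ∨ x ^ ((p-1)/2) = -1 := by
  have h2 : 2 < p := hp2 p hp
  apply mul_self_eq_one_iff.mp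
  rw [← pow_add]
  have : (p-1)/2 + (p-1)/2 = p - 1 := by omega
  rw [this]
  exact ZMod.pow_card_sub_one_eq_one hx

-- witness lemma
lemma hwit (j : ℕ) (hj1 : 1 ≤ j) (hj2 : 2*j < p) (ε : ZMod p) (hε : ε = 1 ∨ ε = -1) :
    ∃ x : ZMod p, min x.val (p - x.val) = j ∧ x ^ ((p-1)/2) = ε := by
  have h2 : 2 < p := hp2 p hp
  have hjv : ((j : ZMod p)).val = j := ZMod.val_natCast_of_lt (by omega)
  have hj0 : (j : ZMod p) ≠ 0 := by
    intro h
    rw [← ZMod.val_eq_zero, hjv] at h; omega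
  have hnegval : (-(j : ZMod p)).val = p - j := by
    rw [ZMod.neg_val]; simp [hj0, hjv]
  have hmin1 : min ((j : ZMod p)).val (p - ((j : ZMod p)).val) = j := by
    rw [hjv]; omega
  have hmin2 : min ((-(j : ZMod p))).val (p - ((-(j : ZMod p))).val) = j := by
    rw [hnegval]; omega
  have hodd : Odd ((p-1)/2) := by rw [Nat.odd_iff]; omega
  have hneg : (-(j : ZMod p)) ^ ((p-1)/2) = -((j : ZMod p) ^ ((p-1)/2)) :=
    hodd.neg_pow _
  rcases hsig p hp _ hj0 with h | h <;> rcases hε with rfl | rfl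
  · exact ⟨(j : ZMod p), hmin1, h⟩
  · exact ⟨-(j : ZMod p), hmin2, by rw [hneg, h]⟩
  · exact ⟨-(j : ZMod p), hmin2, by rw [hneg, h, neg_neg]⟩
  · exact ⟨(j : ZMod p), hmin1, h⟩


lemma hsurj : Function.Surjective
    (fun x : ZMod p => ((wfun (min x.val (p - x.val)) : ℕ) : ZMod p) + x ^ ((p-1)/2)) := by
  have h2 : 2 < p := hp2 p hp
  intro c
  by_cases hc : c = 1
  · refine ⟨0, ?_⟩
    have h0 : (0 : ZMod p).val = 0 := ZMod.val_zero
    simp only [h0, Nat.sub_zero, Nat.min_eq_left (Nat.zero_le p)]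
    have : wfun 0 = 1 := by unfold wfun; simp
    rw [this, hc]
    have hm0 : (p-1)/2 ≠ 0 := by omega
    rw [zero_pow hm0]
    simp
  · have hcv : c.val ≠ 1 := by
      intro h
      apply hc
      have := ZMod.natCast_val (R := ZMod p) c
      rw [ZMod.cast_id] at this
      rw [← this, h, Nat.cast_one]
    obtain ⟨j, hj1, hj2, hcase⟩ := cover p c.val hp (ZMod.val_lt c) hcv
    have hcc : ((c.val : ℕ) : ZMod p) = c := by
      have := ZMod.natCast_val (R := ZMod p) c; rwa [ZMod.cast_id] at this
    rcases hcase with h | h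
    · obtain ⟨x, hxmin, hxpow⟩ := hwit p hp j hj1 hj2 1 (Or.inl rfl)
      refine ⟨x, ?_⟩
      simp only [hxmin, hxpow]
      rw [← hcc, h]
      push_cast
      ring
    · obtain ⟨x, hxmin, hxpow⟩ := hwit p hp j hj1 hj2 (-1) (Or.inr rfl)
      refine ⟨x, ?_⟩
      simp only [hxmin, hxpow]
      have : ((c.val + 1 : ℕ) : ZMod p) = ((wfun j : ℕ) : ZMod p) := by rw [h]
      push_cast at this
      rw [← hcc]
      linear_combination -this

lemma wfun_lt (j : ℕ) (hj : 2*j < p) : wfun j < p := by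
  have h2 : 2 < p := hp2 p hp
  unfold wfun; split_ifs <;> omega

lemma hVg : (univ.image
    (fun x : ZMod p => ((wfun (min x.val (p - x.val)) : ℕ) : ZMod p))).card = (p-1)/2 := by
  have h2 : 2 < p := hp2 p hp
  have himg : univ.image (fun x : ZMod p => ((wfun (min x.val (p - x.val)) : ℕ) : ZMod p))
      = (Finset.Icc 1 ((p-1)/2)).image (fun j => ((wfun j : ℕ) : ZMod p)) := by
    apply Finset.Subset.antisymm
    · intro y hy
      simp only [mem_image, mem_univ, true_and] at hy ⊢
      obtain ⟨x, hx⟩ := hy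
      have hxv : x.val < p := ZMod.val_lt x
      refine ⟨max 1 (min x.val (p - x.val)), ?_, ?_⟩
      · simp only [Finset.mem_Icc]; omega
      · have : wfun (max 1 (min x.val (p - x.val))) = wfun (min x.val (p - x.val)) := by
          unfold wfun; split_ifs <;> omega
        rw [this, hx]
    · intro y hy
      simp only [mem_image, mem_univ, true_and, Finset.mem_Icc] at hy ⊢
      obtain ⟨j, ⟨hj1, hj2⟩, hjy⟩ := hy
      obtain ⟨x, hxmin, _⟩ := hwit p hp j hj1 (by omega) 1 (Or.inl rfl)
      exact ⟨x, by rw [hxmin, hjy]⟩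
  rw [himg, Finset.card_image_of_injOn, Nat.card_Icc]
  · omega
  · intro a ha b hb hab
    simp only [Finset.coe_Icc, Set.mem_Icc] at ha hb
    have hwa : wfun a < p := wfun_lt p hp a (by omega)
    have hwb : wfun b < p := wfun_lt p hp b (by omega)
    have := congrArg ZMod.val hab
    rw [ZMod.val_natCast_of_lt hwa, ZMod.val_natCast_of_lt hwb] at this
    revert this
    unfold wfun; split_ifs <;> omega

lemma hlow (n : ℕ) (g : ZMod p → ZMod p)
    (hbij : Function.Bijective (fun x => g x + x ^ ((p-1)/2)))
    (hV : (univ.image g).card = n) : (p-1)/2 ≤ n := by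
  have h2 : 2 < p := hp2 p hp
  have hfib : ∀ v : ZMod p,
      (univ.filter fun x => g x = v).card ≤ 2 + (if v = g 0 then 1 else 0) := by
    intro v
    have hinj : Set.InjOn (fun x : ZMod p => x ^ ((p-1)/2))
        ((univ.filter fun x => g x = v) : Finset (ZMod p)) := by
      intro x hx y hy hxy
      simp only [coe_filter, Set.mem_setOf_eq, mem_univ, true_and] at hx hy
      apply hbij.injective
      simp only [hx, hy, hxy]
    rw [← Finset.card_image_of_injOn hinj]
    by_cases hv : v = g 0
    · rw [if_pos hv]
      have hsub : (univ.filter fun x => g x = v).image (fun x : ZMod p => x ^ ((p-1)/2))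
          ⊆ {0, 1, -1} := by
        intro y hy
        simp only [mem_image, mem_filter, mem_univ, true_and] at hy
        obtain ⟨x, _, rfl⟩ := hy
        by_cases hx0 : x = 0
        · subst hx0; rw [zero_pow (by omega : (p-1)/2 ≠ 0)]; simp
        · rcases hsig p hp x hx0 with h | h <;> simp [h]
      apply le_trans (Finset.card_le_card hsub)
      apply le_trans (Finset.card_insert_le _ _)
      have : ({1, -1} : Finset (ZMod p)).card ≤ 2 :=
        le_trans (Finset.card_insert_le _ _) (by simp)
      omega
    · rw [if_neg hv]
      have hsub : (univ.filter fun x => g x = v).image (fun x : ZMod p => x ^ ((p-1)/2))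
          ⊆ {1, -1} := by
        intro y hy
        simp only [mem_image, mem_filter, mem_univ, true_and] at hy
        obtain ⟨x, hxg, rfl⟩ := hy
        have hx0 : x ≠ 0 := fun h => hv (by rw [← hxg, h])
        rcases hsig p hp x hx0 with h | h <;> simp [h]
      apply le_trans (Finset.card_le_card hsub)
      exact le_trans (Finset.card_insert_le _ _) (by simp)
  have hcard : (univ : Finset (ZMod p)).card = p := by rw [Finset.card_univ, ZMod.card]
  have hsum := Finset.card_eq_sum_card_image g (univ : Finset (ZMod p))
  have hle : ∑ v ∈ univ.image g, (univ.filter fun x => g x = v).card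
      ≤ ∑ v ∈ univ.image g, (2 + if v = g 0 then 1 else 0) :=
    Finset.sum_le_sum (fun v _ => hfib v)
  have heq : ∑ v ∈ univ.image g, (2 + if v = g 0 then 1 else 0) = 2*n + 1 := by
    rw [Finset.sum_add_distrib, Finset.sum_const, hV,
      Finset.sum_ite_eq' (univ.image g) (g 0) (fun _ => 1)]
    rw [if_pos (mem_image_of_mem g (mem_univ 0)), smul_eq_mul]
    ring
  omega

end


theorem stmt_7 (p : ℕ) [Fact p.Prime] (hp : p % 4 = 3) :
    pres (fun x : ZMod p => x ^ ((p - 1) / 2)) = (p - 1) / 2 := by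
  have hmem : (p-1)/2 ∈ {n | ∃ g : ZMod p → ZMod p,
      Function.Bijective (fun x => g x + x ^ ((p - 1) / 2)) ∧ V g = n} :=
    ⟨fun x => ((wfun (min x.val (p - x.val)) : ℕ) : ZMod p),
      (Finite.surjective_iff_bijective).mp (hsurj p hp), hVg p hp⟩
  unfold pres
  apply le_antisymm
  · exact Nat.sInf_le hmem
  · exact le_csInf ⟨_, hmem⟩
      (fun n hn => by obtain ⟨g, hb, hV⟩ := hn; exact hlow p hp n g hb hV)
end

section
/- Let p > 5 be a prime with p ≡ 1 (mod 4), and let f(x) = x^{(p-1)/2} on F_p. Then pres(f) = (p+1)/2. -/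
open Finset

variable {G : Type*}

section AuxiliaryForStmt8

open Polynomial in

lemma card_pow_eq_le {K : Type*} [Field K] [Fintype K] [DecidableEq K] {m : ℕ} (hm : 0 < m) (a : K) :
    #(univ.filter fun x => x ^ m = a) ≤ m := by
  have hne : (X ^ m - C a : K[X]) ≠ 0 := X_pow_sub_C_ne_zero hm a
  have hsub : (univ.filter fun x => x ^ m = a) ⊆ (X ^ m - C a : K[X]).roots.toFinset := by
    intro x hx
    simp only [mem_filter] at hx
    rw [Multiset.mem_toFinset, mem_roots hne]
    simp [IsRoot, sub_eq_zero, hx.2]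
  calc #(univ.filter fun x => x ^ m = a) ≤ _ := card_le_card hsub
    _ ≤ Multiset.card (X ^ m - C a : K[X]).roots := Multiset.toFinset_card_le _
    _ ≤ (X ^ m - C a : K[X]).natDegree := card_roots' _
    _ = m := natDegree_X_pow_sub_C

lemma card_pow_filter (p : ℕ) [Fact p.Prime] (hodd : p % 2 = 1) :
    #(univ.filter fun x : ZMod p => x ^ (p/2) = 1) = p / 2 ∧
    #(univ.filter fun x : ZMod p => x ^ (p/2) = -1) = p / 2 := by
  have hp : 2 ≤ p := (Fact.out : p.Prime).two_le
  haveI : NeZero p := ⟨by omega⟩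
  have h1 : #(univ.filter fun x : ZMod p => x ^ (p/2) = 1) ≤ p / 2 := card_pow_eq_le (by omega) 1
  have h2 : #(univ.filter fun x : ZMod p => x ^ (p/2) = -1) ≤ p / 2 := card_pow_eq_le (by omega) (-1)
  have hcover : (univ.filter fun x : ZMod p => x ≠ 0) ⊆
      (univ.filter fun x : ZMod p => x ^ (p/2) = 1) ∪ (univ.filter fun x : ZMod p => x ^ (p/2) = -1) := by
    intro x hx
    simp only [mem_filter, mem_union, mem_univ, true_and] at *
    exact ZMod.pow_div_two_eq_neg_one_or_one p hx
  have hcard0 : #(univ.filter fun x : ZMod p => x ≠ 0) = p - 1 := by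
    rw [filter_ne']
    rw [card_erase_of_mem (mem_univ _), card_univ, ZMod.card]
  have hle : p - 1 ≤ #(univ.filter fun x : ZMod p => x ^ (p/2) = 1) +
      #(univ.filter fun x : ZMod p => x ^ (p/2) = -1) := by
    calc p - 1 = #(univ.filter fun x : ZMod p => x ≠ 0) := hcard0.symm
      _ ≤ _ := card_le_card hcover
      _ ≤ _ := card_union_le _ _
  constructor <;> omega

lemma idx_lt {p : ℕ} [NeZero p] (s : Finset (ZMod p)) {x : ZMod p} (hx : x ∈ s) :
    #(s.filter fun y => y.val < x.val) < #s := by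
  apply card_lt_card
  rw [ssubset_iff_of_subset (filter_subset _ _)]
  exact ⟨x, hx, by simp⟩

lemma idx_inj {p : ℕ} [NeZero p] (s : Finset (ZMod p)) {x y : ZMod p} (hx : x ∈ s) (hy : y ∈ s)
    (h : #(s.filter fun z => z.val < x.val) = #(s.filter fun z => z.val < y.val)) : x = y := by
  have key : ∀ a b : ZMod p, a ∈ s → b ∈ s → a.val < b.val →
      #(s.filter fun z => z.val < a.val) < #(s.filter fun z => z.val < b.val) := by
    intro a b ha hb hab
    apply card_lt_card
    constructor
    · intro z hz
      simp only [mem_filter] at *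
      exact ⟨hz.1, hz.2.trans hab⟩
    · intro hcon
      have := hcon (mem_filter.mpr ⟨ha, hab⟩)
      simp at this
  rcases lt_trichotomy x.val y.val with hl | he | hl
  · exact absurd h (by have := key x y hx hy hl; omega)
  · exact ZMod.val_injective p he
  · exact absurd h (by have := key y x hy hx hl; omega)

lemma lower_bound (p : ℕ) [Fact p.Prime] (hp : p % 4 = 1) (hp5 : 5 < p)
    (g : ZMod p → ZMod p) (hbij : Function.Bijective (fun x => g x + x ^ ((p - 1) / 2))) :
    (p + 1) / 2 ≤ V g := by
  have hprime : p.Prime := Fact.out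
  haveI : NeZero p := ⟨by omega⟩
  have hodd : p % 2 = 1 := by omega
  have he : (p - 1) / 2 = p / 2 := by omega
  set σ : ZMod p → ZMod p := fun x => g x + x ^ ((p - 1) / 2) with hσ
  have hσinj : Function.Injective σ := hbij.injective
  have hf0 : (0 : ZMod p) ^ ((p - 1) / 2) = 0 := zero_pow (by omega)
  have hfx : ∀ x : ZMod p, x ≠ 0 → x ^ ((p - 1) / 2) = 1 ∨ x ^ ((p - 1) / 2) = -1 := by
    intro x hx
    rw [he]
    exact ZMod.pow_div_two_eq_neg_one_or_one p hx
  have h2ne : (2 : ZMod p) ≠ 0 := by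
    have := (ZMod.natCast_eq_zero_iff 2 p).not.mpr
      (by intro hdvd; have := Nat.le_of_dvd (by norm_num) hdvd; omega)
    simpa using this
  have h1ne : (1 : ZMod p) ≠ -1 := by
    intro hcon
    apply h2ne
    linear_combination hcon
  set Qs := univ.filter fun x : ZMod p => x ^ ((p - 1) / 2) = 1 with hQs
  set Ns := univ.filter fun x : ZMod p => x ^ ((p - 1) / 2) = -1 with hNs
  obtain ⟨hQcard, hNcard⟩ := card_pow_filter p hodd
  rw [show p / 2 = (p - 1) / 2 from he.symm] at hQcard hNcard
  have h0Q : (0 : ZMod p) ∉ Qs := by simp [hQs, hf0]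
  have h0N : (0 : ZMod p) ∉ Ns := by
    simp only [hNs, mem_filter, mem_univ, true_and, hf0]
    intro hcon
    exact h1ne (by linear_combination 2 * hcon)
  set S := Qs.image σ with hS
  set T := Ns.image σ with hT
  set c := σ 0 with hc
  have hScard : #S = (p - 1) / 2 := by rw [hS, card_image_of_injective _ hσinj]; exact hQcard
  have hTcard : #T = (p - 1) / 2 := by rw [hT, card_image_of_injective _ hσinj]; exact hNcard
  -- g values
  have hgQ : ∀ x ∈ Qs, g x = σ x - 1 := by
    intro x hx
    simp only [hQs, mem_filter] at hx
    simp only [hσ]; rw [hx.2]; ring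
  have hgN : ∀ x ∈ Ns, g x = σ x + 1 := by
    intro x hx
    simp only [hNs, mem_filter] at hx
    simp only [hσ]; rw [hx.2]; ring
  have hg0 : g 0 = c := by rw [hc, hσ]; simp [hf0]
  set A := S.image (fun s => s - 1) with hA
  have hAcard : #A = (p - 1) / 2 := by
    rw [hA, card_image_of_injective _ (sub_left_injective), hScard]
  have hAsub : A ⊆ univ.image g := by
    intro a ha
    rw [hA] at ha
    obtain ⟨s, hs, rfl⟩ := mem_image.mp ha
    obtain ⟨x, hx, rfl⟩ := mem_image.mp hs
    exact mem_image.mpr ⟨x, mem_univ x, hgQ x hx⟩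
  by_contra hcon
  push_neg at hcon
  have hVdef : V g = #(univ.image g) := rfl
  have hVn : #(univ.image g) = (p - 1) / 2 := by
    have h1 : (p - 1) / 2 ≤ #(univ.image g) := by rw [← hAcard]; exact card_le_card hAsub
    omega
  have hgA : univ.image g = A := (eq_of_subset_of_card_le hAsub (by omega)).symm
  set B := T.image (fun t => t + 1) with hB
  have hBcard : #B = (p - 1) / 2 := by rw [hB, card_image_of_injective _ (add_left_injective 1), hTcard]
  have hBsub : B ⊆ A := by
    rw [← hgA]
    intro b hb
    rw [hB] at hb
    obtain ⟨t, ht, rfl⟩ := mem_image.mp hb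
    obtain ⟨x, hx, rfl⟩ := mem_image.mp ht
    exact mem_image.mpr ⟨x, mem_univ x, hgN x hx⟩
  have hBA : B = A := eq_of_subset_of_card_le hBsub (by omega)
  have hcA : c ∈ A := by
    rw [← hgA]
    exact mem_image.mpr ⟨0, mem_univ 0, hg0⟩
  -- key translation fact
  have hTS : ∀ x : ZMod p, x ∈ T ↔ x + 2 ∈ S := by
    intro x
    constructor
    · intro hx
      have : x + 1 ∈ B := mem_image.mpr ⟨x, hx, rfl⟩
      rw [hBA, hA] at this
      obtain ⟨s, hs, hseq⟩ := mem_image.mp this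
      have : s = x + 2 := by linear_combination hseq
      rwa [this] at hs
    · intro hx
      have : x + 1 ∈ A := by
        rw [hA]
        exact mem_image.mpr ⟨x + 2, hx, by ring⟩
      rw [← hBA, hB] at this
      obtain ⟨t, ht, hteq⟩ := mem_image.mp this
      have : t = x := by linear_combination hteq
      rwa [this] at ht
  have hcS : c ∉ S := by
    rw [hS]
    intro hcon'
    obtain ⟨x, hx, hxe⟩ := mem_image.mp hcon'
    have hx0 := hσinj hxe
    rw [hx0] at hx
    exact h0Q hx
  have hcT : c ∉ T := by
    rw [hT]
    intro hcon'
    obtain ⟨x, hx, hxe⟩ := mem_image.mp hcon'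
    have hx0 := hσinj hxe
    rw [hx0] at hx
    exact h0N hx
  have hSTdisj : ∀ x : ZMod p, x ∈ S → x ∈ T → False := by
    intro x hxS hxT
    obtain ⟨a, ha, hae⟩ := mem_image.mp hxS
    obtain ⟨b, hb, hbe⟩ := mem_image.mp hxT
    have hab : a = b := hσinj (hae.trans hbe.symm)
    simp only [hQs, hNs, mem_filter] at ha hb
    rw [hab] at ha
    exact h1ne (ha.2.symm.trans hb.2)
  have hcover : ∀ x : ZMod p, x ≠ c → x ∈ S ∨ x ∈ T := by
    intro x hx
    obtain ⟨a, ha⟩ := hbij.surjective x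
    by_cases ha0 : a = 0
    · subst ha0; exact absurd (hc.trans ha).symm hx
    · rcases hfx a ha0 with h | h
      · left; exact mem_image.mpr ⟨a, by simp [hQs, h], ha⟩
      · right; exact mem_image.mpr ⟨a, by simp [hNs, h], ha⟩
  -- the walk
  have walk : ∀ k : ℕ, 1 ≤ k → k ≤ p → (c + ((2 * k : ℕ) : ZMod p) ∈ S ↔ Even k) := by
    intro k hk1
    induction k, hk1 using Nat.le_induction with
    | base =>
      intro _
      simp only [Nat.not_even_one, iff_false]
      intro hcon'
      apply hcT
      rw [hTS c]
      have heq : c + ((2 * 1 : ℕ) : ZMod p) = c + 2 := by push_cast; ring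
      rwa [heq] at hcon'
    | succ k hk ih =>
      intro hkp
      have ihk := ih (by omega)
      have hxc : c + ((2 * k : ℕ) : ZMod p) ≠ c := by
        intro hcon'
        have h2k : ((2 * k : ℕ) : ZMod p) = 0 := by linear_combination hcon'
        rw [ZMod.natCast_eq_zero_iff] at h2k
        have := (Nat.Prime.dvd_mul hprime).mp h2k
        rcases this with h | h
        · have := Nat.le_of_dvd (by norm_num) h; omega
        · have hkub : k < p := by omega
          have := Nat.le_of_dvd (by omega) h
          omega
      have heq : c + ((2 * (k+1) : ℕ) : ZMod p) = (c + ((2 * k : ℕ) : ZMod p)) + 2 := by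
        push_cast; ring
      have hstep : c + ((2 * (k+1) : ℕ) : ZMod p) ∈ S ↔ c + ((2 * k : ℕ) : ZMod p) ∈ T := by
        rw [hTS, heq]
      rw [hstep]
      have hnotboth := hSTdisj (c + ((2 * k : ℕ) : ZMod p))
      have hor := hcover _ hxc
      rw [Nat.even_add_one, ← ihk]
      constructor
      · intro hT' hS'; exact hnotboth hS' hT'
      · intro hS'
        rcases hor with h | h
        · exact absurd h hS'
        · exact h
  -- conclude
  have hc1S : c + 1 ∈ S := by
    rw [hA] at hcA
    obtain ⟨s, hs, hseq⟩ := mem_image.mp hcA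
    have : s = c + 1 := by linear_combination hseq
    rwa [this] at hs
  have hk0 : ¬ Even ((p + 1) / 2) := by
    rw [Nat.even_iff]
    omega
  apply hk0
  rw [← walk ((p + 1) / 2) (by omega) (by omega)]
  have heq : c + ((2 * ((p + 1) / 2) : ℕ) : ZMod p) = c + 1 := by
    have h2k : 2 * ((p + 1) / 2) = p + 1 := by omega
    rw [h2k]
    push_cast
    rw [ZMod.natCast_self]
    ring
  rwa [heq]

lemma upper_bound (p : ℕ) [Fact p.Prime] (hp : p % 4 = 1) (hp5 : 5 < p) :
    ∃ g : ZMod p → ZMod p, Function.Bijective (fun x => g x + x ^ ((p - 1) / 2)) ∧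
      V g ≤ (p + 1) / 2 := by
  have hprime : p.Prime := Fact.out
  haveI : NeZero p := ⟨by omega⟩
  have hodd : p % 2 = 1 := by omega
  have he : (p - 1) / 2 = p / 2 := by omega
  have hf0 : (0 : ZMod p) ^ ((p - 1) / 2) = 0 := zero_pow (by omega)
  have h2ne : (2 : ZMod p) ≠ 0 := by
    have := (ZMod.natCast_eq_zero_iff 2 p).not.mpr
      (by intro hdvd; have := Nat.le_of_dvd (by norm_num) hdvd; omega)
    simpa using this
  set Qs := univ.filter fun x : ZMod p => x ^ ((p - 1) / 2) = 1 with hQs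
  set Ns := univ.filter fun x : ZMod p => x ^ ((p - 1) / 2) = -1 with hNs
  obtain ⟨hQcard, hNcard⟩ := card_pow_filter p hodd
  rw [show p / 2 = (p - 1) / 2 from he.symm] at hQcard hNcard
  have hmemN : ∀ x : ZMod p, x ≠ 0 → x ∉ Qs → x ∈ Ns := by
    intro x hx0 hxQ
    rcases ZMod.pow_div_two_eq_neg_one_or_one p hx0 with h | h
    · exact absurd (mem_filter.mpr ⟨mem_univ x, by rw [he]; exact h⟩) hxQ
    · exact mem_filter.mpr ⟨mem_univ x, by rw [he]; exact h⟩
  classical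
  set idx : ZMod p → ℕ := fun x =>
    if x = 0 then 0
    else if x ∈ Qs then 2 * #(Qs.filter fun y => y.val < x.val) + 2
    else 2 * #(Ns.filter fun y => y.val < x.val) + 1 with hidx
  have hidxlt : ∀ x, idx x < p := by
    intro x
    rw [hidx]
    by_cases hx0 : x = 0
    · simp [hx0]; omega
    · by_cases hxQ : x ∈ Qs
      · simp only [hx0, hxQ, if_false, if_true]
        have := idx_lt Qs hxQ
        rw [hQcard] at this
        omega
      · simp only [hx0, hxQ, if_false]
        have := idx_lt Ns (hmemN x hx0 hxQ)
        rw [hNcard] at this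
        omega
  have hidxinj : ∀ x y : ZMod p, idx x = idx y → x = y := by
    intro x y hxy
    rw [hidx] at hxy
    by_cases hx0 : x = 0 <;> by_cases hy0 : y = 0
    · rw [hx0, hy0]
    · by_cases hyQ : y ∈ Qs <;> simp only [hx0, hy0, hyQ, if_true, if_false] at hxy <;> omega
    · by_cases hxQ : x ∈ Qs <;> simp only [hx0, hy0, hxQ, if_true, if_false] at hxy <;> omega
    · by_cases hxQ : x ∈ Qs <;> by_cases hyQ : y ∈ Qs <;>
        simp only [hx0, hy0, hxQ, hyQ, if_true, if_false] at hxy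
      · exact idx_inj Qs hxQ hyQ (by omega)
      · omega
      · omega
      · exact idx_inj Ns (hmemN x hx0 hxQ) (hmemN y hy0 hyQ) (by omega)
  set g : ZMod p → ZMod p := fun x => 2 * ((idx x : ℕ) : ZMod p) - x ^ ((p - 1) / 2) with hg
  have hfun : (fun x : ZMod p => g x + x ^ ((p - 1) / 2)) = fun x => 2 * ((idx x : ℕ) : ZMod p) := by
    funext x
    rw [hg]
    ring
  have hinj : Function.Injective (fun x : ZMod p => ((idx x : ℕ) : ZMod p)) := by
    intro x y hxy
    apply hidxinj
    have h1 := congrArg ZMod.val hxy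
    simp only at h1
    rwa [ZMod.val_cast_of_lt (hidxlt x), ZMod.val_cast_of_lt (hidxlt y)] at h1
  have hbij : Function.Bijective (fun x : ZMod p => g x + x ^ ((p - 1) / 2)) := by
    rw [hfun]
    apply Finite.injective_iff_bijective.mp
    intro a b hab
    exact hinj (mul_left_cancel₀ h2ne hab)
  refine ⟨g, hbij, ?_⟩
  have himg : univ.image g ⊆
      insert (0 : ZMod p) (((range ((p - 1) / 2)).image fun i => ((4 * i + 3 : ℕ) : ZMod p))) := by
    intro b hb
    obtain ⟨x, _, rfl⟩ := mem_image.mp hb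
    by_cases hx0 : x = 0
    · have hgx : g x = 0 := by
        rw [hg, hidx, hx0]
        simp [hf0]
      rw [hgx]
      exact mem_insert_self _ _
    · by_cases hxQ : x ∈ Qs
      · apply mem_insert_of_mem
        have hfx : x ^ ((p - 1) / 2) = 1 := (mem_filter.mp hxQ).2
        refine mem_image.mpr ⟨#(Qs.filter fun y => y.val < x.val), ?_, ?_⟩
        · rw [mem_range, ← hQcard]; exact idx_lt Qs hxQ
        · rw [hg, hidx]
          simp only [hx0, hxQ, if_false, if_true]
          rw [hfx]
          push_cast
          ring
      · apply mem_insert_of_mem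
        have hxN := hmemN x hx0 hxQ
        have hfx : x ^ ((p - 1) / 2) = -1 := (mem_filter.mp hxN).2
        refine mem_image.mpr ⟨#(Ns.filter fun y => y.val < x.val), ?_, ?_⟩
        · rw [mem_range, ← hNcard]; exact idx_lt Ns hxN
        · rw [hg, hidx]
          simp only [hx0, hxQ, if_false]
          rw [hfx]
          push_cast
          ring
  calc V g ≤ #(insert (0 : ZMod p) (((range ((p - 1) / 2)).image fun i => ((4 * i + 3 : ℕ) : ZMod p)))) :=
        card_le_card himg
    _ ≤ 1 + #(((range ((p - 1) / 2)).image fun i => ((4 * i + 3 : ℕ) : ZMod p))) := by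
        rw [add_comm]; exact card_insert_le _ _
    _ ≤ 1 + (p - 1) / 2 := by
        have := card_image_le (s := range ((p - 1) / 2)) (f := fun i => ((4 * i + 3 : ℕ) : ZMod p))
        rw [card_range] at this
        omega
    _ ≤ (p + 1) / 2 := by omega

end AuxiliaryForStmt8


theorem stmt_8 (p : ℕ) [Fact p.Prime] (hp : p % 4 = 1) (hp5 : 5 < p) :
    pres (fun x : ZMod p => x ^ ((p - 1) / 2)) = (p + 1) / 2 := by
  have hprime : p.Prime := Fact.out
  haveI : NeZero p := ⟨by have := hprime.two_le; omega⟩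
  obtain ⟨g, hbij, hVle⟩ := upper_bound p hp hp5
  have hset : pres (fun x : ZMod p => x ^ ((p - 1) / 2)) =
      sInf {n | ∃ g' : ZMod p → ZMod p,
        Function.Bijective (fun x => g' x + x ^ ((p - 1) / 2)) ∧ V g' = n} := rfl
  rw [hset]
  have hmem : V g ∈ {n | ∃ g' : ZMod p → ZMod p,
      Function.Bijective (fun x => g' x + x ^ ((p - 1) / 2)) ∧ V g' = n} := ⟨g, hbij, rfl⟩
  apply le_antisymm
  · exact (Nat.sInf_le hmem).trans hVle
  · obtain ⟨g₀, hbij₀, hVeq⟩ := Nat.sInf_mem (⟨V g, hmem⟩ : Set.Nonempty _)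
    exact hVeq ▸ lower_bound p hp hp5 g₀ hbij₀
end

section
/- Let G be a finite abelian group and f, g : G → G. Then the differential uniformity of g + f satisfies δ_{g+f} ≤ δ_f · (V(g)² - V(g) + 1). -/
/-!
Since `Δ_{g+f,a} = Δ_{g,a} + Δ_{f,a}`, a solution `x` of `Δ_{g+f,a}(x) = b` is determined, up to
at most `δ_f` choices, by the value `c = Δ_{g,a}(x)`, because then `Δ_{f,a}(x) = b - c`. This value
is a difference of two elements of the image of `g`, and a set `S` has at most
`|S|² - |S| + 1` differences: the `|S|` diagonal pairs all give `0`.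
-/

open Finset

variable {G : Type*}

/-- Differential uniformity of  on an additive group. -/
def du [Fintype G] [DecidableEq G] [AddGroup G] (f : G → G) : ℕ :=
  Finset.sup (((univ : Finset G).erase 0) ×ˢ (univ : Finset G))
    fun ab => (univ.filter fun x => f (x + ab.1) - f x = ab.2).card

open scoped Pointwise

theorem Finset.card_sub_self_le [DecidableEq G] [AddGroup G] (s : Finset G) :
    #(s - s) ≤ #s ^ 2 - #s + 1 := by
  have hsub : s - s ⊆ insert 0 (s.offDiag.image fun p => p.1 - p.2) := by
    intro c hc
    obtain ⟨x, hx, y, hy, rfl⟩ := mem_sub.1 hc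
    by_cases hxy : x = y
    · simp [hxy]
    · exact mem_insert_of_mem (mem_image.2 ⟨(x, y), mem_offDiag.2 ⟨hx, hy, hxy⟩, rfl⟩)
  calc #(s - s) ≤ #(s.offDiag.image fun p => p.1 - p.2) + 1 :=
        (card_le_card hsub).trans (card_insert_le _ _)
    _ ≤ #s.offDiag + 1 := Nat.add_le_add_right card_image_le 1
    _ = #s ^ 2 - #s + 1 := by rw [offDiag_card, sq]

theorem Finset.card_filter_add_eq_le [DecidableEq G] [AddGroup G] {α : Type*} (s : Finset α)
    (u v : α → G) (b : G) {k : ℕ} (hv : ∀ c, #{x ∈ s | v x = c} ≤ k) :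
    #{x ∈ s | u x + v x = b} ≤ k * #(s.image u) := by
  set T := {x ∈ s | u x + v x = b}
  have hfibre : ∀ c ∈ T.image u, #{x ∈ T | u x = c} ≤ k := fun c _ =>
    (card_le_card fun x hx => by
      simp only [T, mem_filter] at hx ⊢
      refine ⟨hx.1.1, ?_⟩
      rw [← hx.2, ← hx.1.2, neg_add_cancel_left]).trans (hv (-c + b))
  calc #T ≤ k * #(T.image u) := card_le_mul_card_image T k hfibre
    _ ≤ k * #(s.image u) :=
        Nat.mul_le_mul_left k (card_le_card (image_subset_image (filter_subset _ s)))

theorem card_filter_sub_eq_le_du [Fintype G] [DecidableEq G] [AddGroup G] (f : G → G)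
    {a : G} (ha : a ≠ 0) (b : G) : #{x | f (x + a) - f x = b} ≤ du f :=
  le_sup (f := fun ab : G × G => #{x | f (x + ab.1) - f x = ab.2}) (b := (a, b))
    (mem_product.2 ⟨mem_erase.2 ⟨ha, mem_univ a⟩, mem_univ b⟩)

theorem image_sub_subset_image_sub_image [Fintype G] [DecidableEq G] [AddGroup G]
    (g : G → G) (a : G) :
    univ.image (fun x => g (x + a) - g x) ⊆ univ.image g - univ.image g := fun _ hc => by
  obtain ⟨x, -, rfl⟩ := mem_image.1 hc
  exact sub_mem_sub (mem_image_of_mem g (mem_univ _)) (mem_image_of_mem g (mem_univ _))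

theorem stmt_13 [Fintype G] [DecidableEq G] [AddCommGroup G] (f g : G → G) :
    du (fun x => g x + f x) ≤ du f * (V g ^ 2 - V g + 1) := by
  refine Finset.sup_le fun ab hab => ?_
  obtain ⟨a, b⟩ := ab
  have ha : a ≠ 0 := (mem_erase.1 (mem_product.1 hab).1).1
  have hsplit : ∀ x, g (x + a) + f (x + a) - (g x + f x) =
      (g (x + a) - g x) + (f (x + a) - f x) := fun x => by abel
  calc #{x | g (x + a) + f (x + a) - (g x + f x) = b}
      = #{x | (g (x + a) - g x) + (f (x + a) - f x) = b} := by simp only [hsplit]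
    _ ≤ du f * #(univ.image fun x => g (x + a) - g x) :=
        card_filter_add_eq_le _ _ _ b (card_filter_sub_eq_le_du f ha)
    _ ≤ du f * #(univ.image g - univ.image g) :=
        Nat.mul_le_mul_left _ (card_le_card (image_sub_subset_image_sub_image g a))
    _ ≤ du f * (V g ^ 2 - V g + 1) := Nat.mul_le_mul_left _ (card_sub_self_le _)
end

section
/- If f is a planar function on F_q with q odd (i.e., for every nonzero a, the map x ↦ f(x+a) - f(x) is a bijection), then pres(f) ≤ (q+1)/2. -/
/-!
Write `q = |F|`. Planarity says that every nonzero `a` is the difference `y - x` of exactly one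
collision `f x = f y`, so `f` has exactly `2q - 1` ordered collision pairs. Cauchy–Schwarz
over the fibres gives `q² ≤ V f · (2q - 1)`, hence `2 V f ≥ q + 1`. A permutation `σ` agreeing
with `f` on one point of each fibre makes `σ - f` vanish on `V f` points, so `σ - f` takes at most
`q - V f + 1` values.
-/

open Finset

variable {G : Type*}

section Resemblance

variable [Fintype G] [DecidableEq G]

theorem V_le_card_compl_add_one [Zero G] {g : G → G} {S : Finset G} (hS : ∀ x ∈ S, g x = 0) :
    V g ≤ #Sᶜ + 1 := by
  have hsub : univ.image g ⊆ insert 0 (Sᶜ.image g) := by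
    intro y hy
    obtain ⟨x, -, rfl⟩ := mem_image.mp hy
    by_cases hx : x ∈ S
    · simp [hS x hx]
    · exact mem_insert_of_mem (mem_image_of_mem g (mem_compl.mpr hx))
  calc V g ≤ #(insert 0 (Sᶜ.image g)) := card_le_card hsub
    _ ≤ #(Sᶜ.image g) + 1 := card_insert_le _ _
    _ ≤ #Sᶜ + 1 := Nat.add_le_add_right card_image_le 1

theorem exists_perm_eqOn_card_eq_V (f : G → G) :
    ∃ (σ : Equiv.Perm G) (S : Finset G), #S = V f ∧ ∀ x ∈ S, σ x = f x := by
  classical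
  obtain ⟨u, hu, hinj⟩ := Set.exists_image_eq_and_injOn Set.univ f
  let e : u ≃ f '' u := Equiv.Set.imageOfInjOn f u hinj
  refine ⟨e.extendSubtype, u.toFinset, ?_, fun x hx => ?_⟩
  · calc #u.toFinset = u.ncard := (Set.ncard_eq_toFinset_card' u).symm
      _ = (f '' u).ncard := hinj.ncard_image.symm
      _ = (univ.image f : Set G).ncard := by rw [hu, coe_image, coe_univ]
      _ = V f := Set.ncard_coe_finset _
  · rw [Set.mem_toFinset] at hx
    rw [Equiv.extendSubtype_apply_of_mem e x hx]
    rfl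

theorem pres_le_V_sub [AddGroup G] (f : G → G) (σ : Equiv.Perm G) :
    pres f ≤ V (fun x => σ x - f x) :=
  Nat.sInf_le ⟨_, by simpa only [sub_add_cancel] using σ.bijective, rfl⟩

theorem pres_le_card_sub_V_add_one [AddGroup G] (f : G → G) :
    pres f ≤ Fintype.card G - V f + 1 := by
  obtain ⟨σ, S, hS, hσ⟩ := exists_perm_eqOn_card_eq_V f
  calc pres f ≤ V (fun x => σ x - f x) := pres_le_V_sub f σ
    _ ≤ #Sᶜ + 1 := V_le_card_compl_add_one fun x hx => sub_eq_zero.mpr (hσ x hx)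
    _ = Fintype.card G - V f + 1 := by rw [card_compl, hS]

end Resemblance

section Collisions

variable {α β : Type*} [Fintype α] [DecidableEq β]

theorem card_collisions_eq_sum_sq (f : α → β) :
    #{p : α × α | f p.1 = f p.2} = ∑ b ∈ univ.image f, #{x | f x = b} ^ 2 := by
  rw [card_eq_sum_card_fiberwise (f := fun p : α × α => f p.1) (t := univ.image f)
    (fun p _ => mem_image_of_mem f (mem_univ p.1))]
  refine sum_congr rfl fun b _ => ?_
  rw [sq, ← card_product]
  congr 1
  ext ⟨x, y⟩
  simp only [mem_filter, mem_univ, true_and, mem_product]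
  constructor
  · rintro ⟨hxy, rfl⟩
    exact ⟨rfl, hxy.symm⟩
  · rintro ⟨rfl, hy⟩
    exact ⟨hy.symm, rfl⟩

theorem sq_card_le_card_image_mul_card_collisions (f : α → β) :
    Fintype.card α ^ 2 ≤ #(univ.image f) * #{p : α × α | f p.1 = f p.2} :=
  calc Fintype.card α ^ 2 = (∑ b ∈ univ.image f, #{x | f x = b}) ^ 2 := by
        rw [← card_eq_sum_card_image, card_univ]
    _ ≤ #(univ.image f) * ∑ b ∈ univ.image f, #{x | f x = b} ^ 2 := sq_sum_le_card_mul_sum_sq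
    _ = #(univ.image f) * #{p : α × α | f p.1 = f p.2} := by rw [card_collisions_eq_sum_sq]

end Collisions

def IsPlanar [AddGroup G] (f : G → G) : Prop :=
  ∀ a : G, a ≠ 0 → Function.Bijective (fun x => f (x + a) - f x)

section Planar

variable [AddGroup G] [Fintype G]

theorem card_collisions_eq_sum_card_shift {β : Type*} [DecidableEq β] (f : G → β) :
    #{p : G × G | f p.1 = f p.2} = ∑ a, #{x | f (x + a) = f x} := by
  simp only [card_filter, Fintype.sum_prod_type]
  calc ∑ x, ∑ y, (if f x = f y then 1 else 0)
      = ∑ x, ∑ a, (if f x = f (x + a) then 1 else 0) :=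
        sum_congr rfl fun x _ => (Equiv.sum_comp (Equiv.addLeft x) _).symm
    _ = ∑ a, ∑ x, (if f (x + a) = f x then 1 else 0) := by
        rw [sum_comm]; simp only [eq_comm]

theorem IsPlanar.card_filter_shift [DecidableEq G] {f : G → G} (hf : IsPlanar f) {a : G}
    (ha : a ≠ 0) :
    #{x | f (x + a) = f x} = 1 := by
  obtain ⟨x₀, hx₀, hx₀_unique⟩ := (hf a ha).existsUnique 0
  refine card_eq_one.mpr ⟨x₀, ?_⟩
  ext x
  simp only [mem_filter, mem_univ, true_and, mem_singleton]
  refine ⟨fun hx => hx₀_unique x (sub_eq_zero.mpr hx), ?_⟩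
  rintro rfl
  exact sub_eq_zero.mp hx₀

theorem IsPlanar.card_collisions [DecidableEq G] {f : G → G} (hf : IsPlanar f) :
    #{p : G × G | f p.1 = f p.2} = 2 * Fintype.card G - 1 := by
  rw [card_collisions_eq_sum_card_shift, ← add_sum_erase _ _ (mem_univ 0),
    sum_congr rfl fun a ha => hf.card_filter_shift (ne_of_mem_erase ha)]
  simp only [add_zero, filter_true, card_univ, sum_const, card_erase_of_mem (mem_univ _),
    smul_eq_mul, mul_one]
  have := Fintype.card_pos (α := G)
  omega

theorem IsPlanar.card_add_one_le_two_mul_V [DecidableEq G] {f : G → G} (hf : IsPlanar f) :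
    Fintype.card G + 1 ≤ 2 * V f := by
  have hcs := sq_card_le_card_image_mul_card_collisions f
  rw [hf.card_collisions] at hcs
  change _ ≤ V f * _ at hcs
  have := Fintype.card_pos (α := G)
  obtain ⟨m, hm⟩ : ∃ m, 2 * Fintype.card G = m + 1 :=
    ⟨_, (Nat.succ_pred_eq_of_pos (by omega)).symm⟩
  rw [hm, Nat.add_sub_cancel] at hcs
  -- if `2 V f ≤ q` then `V f · (2q - 1) < q²`
  nlinarith

end Planar

theorem stmt_14_general {F : Type*} [Field F] [Fintype F] [DecidableEq F]
    (f : F → F)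
    (hplanar : ∀ a : F, a ≠ 0 → Function.Bijective (fun x => f (x + a) - f x)) :
    pres f ≤ (Fintype.card F + 1) / 2 := by
  have hpres := pres_le_card_sub_V_add_one f
  have hV := IsPlanar.card_add_one_le_two_mul_V (f := f) hplanar
  have hV_le : V f ≤ Fintype.card F := card_le_univ _
  omega

theorem stmt_14 {F : Type*} [Field F] [Fintype F] [DecidableEq F]
    (hq : Odd (Fintype.card F)) (f : F → F)
    (hplanar : ∀ a : F, a ≠ 0 → Function.Bijective (fun x => f (x + a) - f x)) :
    pres f ≤ (Fintype.card F + 1) / 2 :=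
  stmt_14_general f hplanar
end

section
/- Let f : F_q → F_q with f(0) = 0 and f exactly d-to-one on nonzero elements (d dividing q-1). If pres(f) = u(f) = d, then there exist d distinct elements c_1, ..., c_d ∈ F_q such that for all nonzero x, y, f(x) - f(y) ∉ { c_i - c_j : i ≠ j }. -/
open Finset

variable {G : Type*}

theorem stmt_15 {F : Type*} [Field F] [Fintype F] [DecidableEq F]
    (f : F → F) (d : ℕ) (hd : d ∣ Fintype.card F - 1) (h0 : f 0 = 0)
    (hdto1 : ∀ x : F, x ≠ 0 → (univ.filter fun y => y ≠ 0 ∧ f y = f x).card = d)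
    (hu : uf f = d) (hpres : pres f = d) :
    ∃ c : Finset F, c.card = d ∧
      ∀ x y : F, x ≠ 0 → y ≠ 0 →
        ∀ ci ∈ c, ∀ cj ∈ c, ci ≠ cj → f x - f y ≠ ci - cj := by
  have hmem : d ∈ {n | ∃ g : F → F, Function.Bijective (fun x => g x + f x) ∧ V g = n} := by
    rw [← hpres]
    apply Nat.sInf_mem
    refine ⟨V (fun x => x - f x), fun x => x - f x, ?_, rfl⟩
    have : (fun x : F => (x - f x) + f x) = id := by funext x; simp
    rw [this]; exact Function.bijective_id
  obtain ⟨g, hbij, hV⟩ := hmem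
  refine ⟨univ.image g, hV, ?_⟩
  intro x y hx hy ci hci cj hcj hne heq
  have key : ∀ z : F, z ≠ 0 → ∀ c' ∈ univ.image g,
      ∃ z', z' ≠ 0 ∧ f z' = f z ∧ g z' = c' := by
    intro z hz c' hc'
    have hcardfib : ((univ.filter fun w => w ≠ 0 ∧ f w = f z).image g).card = d := by
      rw [Finset.card_image_of_injOn, hdto1 z hz]
      intro a ha b hb hab
      simp only [Finset.mem_coe, Finset.mem_filter] at ha hb
      apply hbij.injective (a₁ := a) (a₂ := b)
      simp only []
      rw [hab, ha.2.2, hb.2.2]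
    have himg : (univ.filter fun w => w ≠ 0 ∧ f w = f z).image g = univ.image g := by
      apply Finset.eq_of_subset_of_card_le
      · exact Finset.image_subset_image (Finset.subset_univ _)
      · rw [hcardfib]
        exact le_of_eq hV
    rw [← himg] at hc'
    obtain ⟨z', hz', hgz'⟩ := Finset.mem_image.mp hc'
    simp only [Finset.mem_filter] at hz'
    exact ⟨z', hz'.2.1, hz'.2.2, hgz'⟩
  obtain ⟨x', hx0, hfx, hgx⟩ := key x hx cj hcj
  obtain ⟨y', hy0, hfy, hgy⟩ := key y hy ci hci
  have hxy : g x' + f x' = g y' + f y' := by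
    rw [hgx, hgy, hfx, hfy]
    linear_combination heq
  have hxy' : x' = y' := hbij.injective hxy
  apply hne
  rw [← hgy, ← hgx, hxy']
end

section
/- Let q > 5 be an odd prime power and f a planar function on F_q with f(0) = 0 that is two-to-one on the nonzero elements. Then pres(f) > 2. -/
open Finset

variable {G : Type*}

/-!
If `g + f` is a permutation, then `x ↦ (g x, f x)` is injective. So if `g` takes only two values
`a ≠ b`, every fibre of `f` has at most two points, and the two nonzero points of a fibre of the
two-to-one `f` lie one in `g⁻¹(a)` and one in `g⁻¹(b)`. Then `f x - f y = b - a` with `x, y ≠ 0`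
would produce `x' ∈ g⁻¹(a)`, `y' ∈ g⁻¹(b)` with `a + f x' = b + f y'`, contradicting injectivity
of `g + f`. So every solution has `x = 0` or `y = 0`, and as `f 0 = 0` there are at most four
of them, whereas planarity gives exactly `q - 1`; hence `q ≤ 5`.
-/

theorem exists_bijective_add_V_eq_pres [Fintype G] [DecidableEq G] [AddGroup G]
    (f : G → G) : ∃ g : G → G, Function.Bijective (fun x => g x + f x) ∧ V g = pres f :=
  Nat.sInf_mem (s := {n | ∃ g : G → G, Function.Bijective (fun x => g x + f x) ∧ V g = n})
    ⟨_, fun x => x - f x, by simp, rfl⟩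

theorem exists_ne_forall_eq_or_eq_of_V_le_two [Fintype G] [DecidableEq G]
    [Nontrivial G] {g : G → G} (hg : V g ≤ 2) : ∃ a b, a ≠ b ∧ ∀ x, g x = a ∨ g x = b := by
  have hmem (x : G) : g x ∈ univ.image g := mem_image_of_mem g (mem_univ x)
  obtain hlt | heq := hg.lt_or_eq
  · obtain ⟨a, ha⟩ := card_le_one_iff_subset_singleton.mp (Nat.le_of_lt_succ hlt)
    obtain ⟨b, hb⟩ := exists_ne a
    exact ⟨a, b, hb.symm, fun x => .inl (mem_singleton.mp (ha (hmem x)))⟩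
  · obtain ⟨a, b, hab, hs⟩ := card_eq_two.mp heq
    exact ⟨a, b, hab, fun x => by simpa [hs] using hmem x⟩

section InjectiveAdd

variable [Fintype G] [DecidableEq G] [Add G] {g f : G → G}
  (hinj : Function.Injective fun x => g x + f x)
include hinj

theorem card_fiber_le_V (v : G) : #{x | f x = v} ≤ V g :=
  card_le_card_of_injOn g (fun x _ => mem_image_of_mem g (mem_univ x)) fun x hx y hy hxy =>
    hinj (by simp_all)

theorem exists_eq_and_eq_of_card_eq_two {s : Finset G} (hs : #s = 2) {a b v : G}
    (hab : ∀ x, g x = a ∨ g x = b) (hv : ∀ y ∈ s, f y = v) : ∃ y, g y = a ∧ f y = v := by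
  by_contra! h
  have hb : ∀ y ∈ s, g y = b := fun y hy => (hab y).resolve_left fun ha => h y ha (hv y hy)
  have : #s ≤ 1 := card_le_one.mpr fun x hx y hy =>
    hinj (by simp [hb x hx, hb y hy, hv x hx, hv y hy])
  omega

end InjectiveAdd

theorem card_filter_sub_eq_of_planar [Fintype G] [DecidableEq G] [AddCommGroup G]
    {f : G → G} (hplanar : ∀ a : G, a ≠ 0 → Function.Bijective (fun x => f (x + a) - f x))
    {c : G} (hc : c ≠ 0) :
    #{p : G × G | f p.1 - f p.2 = c} = Fintype.card G - 1 := by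
  rw [← card_univ, ← card_erase_of_mem (mem_univ 0)]
  have hd {p : G × G} (hp : f p.1 - f p.2 = c) : p.1 - p.2 ≠ 0 := fun h => hc <| by
    rw [← hp, sub_eq_zero.mp h, sub_self]
  refine card_bij (fun p _ => p.1 - p.2)
    (fun p hp => mem_erase.mpr ⟨hd (mem_filter.mp hp).2, mem_univ _⟩)
    (fun p hp p' hp' h => ?_) (fun d hd => ?_)
  · simp only [mem_filter, mem_univ, true_and] at hp hp'
    have h2 : p.2 = p'.2 := (hplanar _ (hd hp)).1 <| by
      simp only
      rw [add_sub_cancel, h, add_sub_cancel, hp, hp']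
    exact Prod.ext (by simpa [h2] using h) h2
  · obtain ⟨y, hy⟩ := (hplanar d (ne_of_mem_erase hd)).2 c
    exact ⟨(y + d, y), by simpa using hy, by simp⟩

theorem card_filter_sub_eq_le_of_eq_zero_or_eq_zero [Fintype G] [DecidableEq G]
    [AddGroup G] {f : G → G} (h0 : f 0 = 0) {c : G}
    (hzero : ∀ x y, f x - f y = c → x = 0 ∨ y = 0) :
    #{p : G × G | f p.1 - f p.2 = c} ≤ #{y | f y = -c} + #{x | f x = c} := by
  calc #{p : G × G | f p.1 - f p.2 = c}
      ≤ #((({y | f y = -c} : Finset G).image fun y => (0, y)) ∪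
          ({x | f x = c} : Finset G).image fun x => (x, 0)) := by
        refine card_le_card fun p hp => ?_
        obtain ⟨x, y⟩ := p
        simp only [mem_filter, mem_univ, true_and] at hp
        rcases hzero x y hp with rfl | rfl
        · simp [← hp, h0]
        · simp [← hp, h0]
    _ ≤ _ := (card_union_le _ _).trans (add_le_add card_image_le card_image_le)

theorem stmt_16_general {F : Type*} [Field F] [Fintype F] [DecidableEq F]
    (hq5 : 5 < Fintype.card F) (f : F → F)
    (hplanar : ∀ a : F, a ≠ 0 → Function.Bijective (fun x => f (x + a) - f x))
    (h0 : f 0 = 0)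
    (h2to1 : ∀ x : F, x ≠ 0 → (univ.filter fun y => y ≠ 0 ∧ f y = f x).card = 2) :
    2 < pres f := by
  obtain ⟨g, hbij, hVg⟩ := exists_bijective_add_V_eq_pres f
  by_contra! hle
  rw [← hVg] at hle
  obtain ⟨a, b, hab, hg⟩ := exists_ne_forall_eq_or_eq_of_V_le_two hle
  have hfib (v : F) : #{x | f x = v} ≤ 2 := (card_fiber_le_V hbij.1 v).trans hle
  have hfiber (x : F) (hx : x ≠ 0) {u w : F} (huw : ∀ y, g y = u ∨ g y = w) :
      ∃ y, g y = u ∧ f y = f x :=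
    exists_eq_and_eq_of_card_eq_two hbij.1 (h2to1 x hx) huw (by simp)
  have hzero (x y : F) (hxy : f x - f y = b - a) : x = 0 ∨ y = 0 := by
    by_contra! hne
    obtain ⟨x', hx'a, hx'f⟩ := hfiber x hne.1 hg
    obtain ⟨y', hy'b, hy'f⟩ := hfiber y hne.2 fun z => (hg z).symm
    have hx'y' : x' = y' := hbij.1 <| by
      simp only [hx'a, hy'b, hx'f, hy'f]
      linear_combination hxy
    exact hab (by rw [← hx'a, hx'y', hy'b])
  have hpairs := card_filter_sub_eq_le_of_eq_zero_or_eq_zero h0 hzero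
  rw [card_filter_sub_eq_of_planar hplanar (sub_ne_zero.mpr hab.symm)] at hpairs
  have := hfib (-(b - a))
  have := hfib (b - a)
  omega

theorem stmt_16 {F : Type*} [Field F] [Fintype F] [DecidableEq F]
    (hq : Odd (Fintype.card F)) (hq5 : 5 < Fintype.card F) (f : F → F)
    (hplanar : ∀ a : F, a ≠ 0 → Function.Bijective (fun x => f (x + a) - f x))
    (h0 : f 0 = 0)
    (h2to1 : ∀ x : F, x ≠ 0 → (univ.filter fun y => y ≠ 0 ∧ f y = f x).card = 2) :
    2 < pres f :=
  stmt_16_general hq5 f hplanar h0 h2to1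
end

section
/- For any function f : G → G on a finite group G of order q, the number of non-values M_0(f) = q - V(f) equals Σ_{s=2}^{u(f)} (-1)^s · N_s(f)/s!, where N_s(f) is the number of s-tuples of pairwise distinct elements on which f takes a common value. -/
open Finset

variable {G : Type*}

lemma fixedb_aux [Fintype G] [DecidableEq G] (f : G → G) (s : ℕ) (b : G) :
    Fintype.card {t : Fin s → G // Function.Injective t ∧ ∀ i, f (t i) = b}
      = ((univ.filter fun x => f x = b).card).descFactorial s := by
  classical
  have e : {t : Fin s → G // Function.Injective t ∧ ∀ i, f (t i) = b} ≃
      (Fin s ↪ {x : G // f x = b}) :=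
  { toFun := fun t => ⟨fun i => ⟨t.1 i, t.2.2 i⟩, fun i j h => t.2.1 (congrArg Subtype.val h)⟩
    invFun := fun e => ⟨fun i => (e i).1,
      ⟨fun i j h => by simpa using e.injective (Subtype.ext h), fun i => (e i).2⟩⟩
    left_inv := fun t => by ext i; rfl
    right_inv := fun e => by ext i; rfl }
  rw [Fintype.card_congr e, Fintype.card_embedding_eq, Fintype.card_fin, Fintype.card_subtype]

lemma N_eq_aux [Fintype G] [DecidableEq G] (f : G → G) (s : ℕ) (hs : 0 < s) :
    N f s = ∑ b : G, ((univ.filter fun x => f x = b).card).descFactorial s := by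
  classical
  rw [N, Nat.card_eq_fintype_card, Fintype.card_subtype]
  rw [Finset.card_eq_sum_card_fiberwise
    (f := fun t : Fin s → G => f (t ⟨0, hs⟩)) (fun t _ => mem_univ _)]
  refine Finset.sum_congr rfl fun b _ => ?_
  rw [← fixedb_aux f s b, Fintype.card_subtype, Finset.filter_filter]
  congr 1
  apply Finset.filter_congr
  intro t _
  constructor
  · rintro ⟨⟨h1, h2⟩, h3⟩
    exact ⟨h1, fun i => (h2 i ⟨0, hs⟩).trans h3⟩
  · rintro ⟨h1, h2⟩
    exact ⟨⟨h1, fun i j => (h2 i).trans (h2 j).symm⟩, h2 _⟩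

lemma alt_sum_aux (c u : ℕ) (hc : c ≤ u) (hu : 1 ≤ u) :
    ∑ s ∈ Icc 2 u, (-1:ℚ)^s * (c.choose s) = (if c = 0 then 1 else 0) - 1 + c := by
  have hz : ∑ s ∈ Ico (c+1) (u+1), (-1:ℚ)^s * c.choose s = 0 :=
    Finset.sum_eq_zero fun s hs => by
      simp [Nat.choose_eq_zero_of_lt (mem_Ico.mp hs).1]
  have h1 : ∑ s ∈ range (u+1), (-1:ℚ)^s * c.choose s = if c = 0 then 1 else 0 := by
    rw [← Finset.sum_range_add_sum_Ico _ (Nat.succ_le_succ hc), hz, add_zero]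
    have h2 := congrArg (fun z : ℤ => (z : ℚ)) (@Int.alternating_sum_range_choose c)
    push_cast at h2 ⊢
    rw [h2]
  have hins : range (u+1) = insert 0 (insert 1 (Icc 2 u)) := by
    ext n; simp [Nat.lt_succ_iff]; omega
  rw [hins, Finset.sum_insert (by simp), Finset.sum_insert (by simp)] at h1
  simp only [pow_zero, pow_one, Nat.choose_zero_right, Nat.choose_one_right] at h1
  push_cast at h1
  linarith [h1]

theorem stmt_17 [Fintype G] [DecidableEq G] [AddGroup G] (f : G → G) :
    (M f 0 : ℚ) = ∑ s ∈ Finset.Icc 2 (uf f), (-1 : ℚ) ^ s * N f s / s.factorial := by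
  classical
  rcases isEmpty_or_nonempty G with hG | hG
  · have hu : uf f = 0 := by simp [uf]
    simp [M, hu]
  · have hu : 1 ≤ uf f := by
      obtain ⟨x⟩ := hG
      calc 1 ≤ (univ.filter fun y => f y = f x).card := card_pos.mpr ⟨x, by simp⟩
        _ ≤ uf f := Finset.le_sup (f := fun b => (univ.filter fun x => f x = b).card) (mem_univ (f x))
    have hc : ∀ b : G, (univ.filter fun x => f x = b).card ≤ uf f :=
      fun b => Finset.le_sup (f := fun b => (univ.filter fun x => f x = b).card) (mem_univ b)
    have step1 : ∀ s ∈ Icc 2 (uf f), (-1:ℚ)^s * N f s / s.factorial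
        = ∑ b : G, (-1:ℚ)^s * ((univ.filter fun x => f x = b).card.choose s) := by
      intro s hs
      have hs0 : 0 < s := by simp only [mem_Icc] at hs; omega
      rw [N_eq_aux f s hs0]
      push_cast
      rw [Finset.mul_sum, Finset.sum_div]
      refine Finset.sum_congr rfl fun b _ => ?_
      rw [Nat.descFactorial_eq_factorial_mul_choose]
      have : ((s.factorial : ℚ)) ≠ 0 := by positivity
      push_cast
      field_simp
    rw [Finset.sum_congr rfl step1, Finset.sum_comm]
    have step2 : ∀ b : G,
        ∑ s ∈ Icc 2 (uf f), (-1:ℚ)^s * ((univ.filter fun x => f x = b).card.choose s)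
        = (if (univ.filter fun x => f x = b).card = 0 then (1:ℚ) else 0) - 1
            + (univ.filter fun x => f x = b).card :=
      fun b => alt_sum_aux _ _ (hc b) hu
    rw [Finset.sum_congr rfl (fun b _ => step2 b)]
    rw [Finset.sum_add_distrib, Finset.sum_sub_distrib]
    have hA : ∑ b : G, (if (univ.filter fun x => f x = b).card = 0 then (1:ℚ) else 0)
        = (M f 0 : ℚ) := by
      rw [Finset.sum_boole, M]
    have hB : ∑ b : G, ((univ.filter fun x => f x = b).card : ℚ)
        = (Fintype.card G : ℚ) := by
      have := Finset.card_eq_sum_card_fiberwise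
        (f := f) (s := (univ : Finset G)) (t := (univ : Finset G)) (fun x _ => mem_univ _)
      rw [← Finset.card_univ, this]
      push_cast
      rfl
    rw [hA, hB]
    simp [Finset.card_univ]
end
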